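/- Let A be a commutative ring and f ∈ A a non-zero-divisor. If V is a finitely generated projective A-module such that the localization V_f is a projective A_f-module of constant rank d, then V has constant rank d. Equivalently: if V is finitely generated projective and V = V₀ ⊕ V₁ with (V₁)_f = 0, then V₁ = 0. -/

import Mathlib

/-!
The rank function of a finitely presented flat module is locally constant on `Spec A`, and `D(f)`
is dense when `f` is a non-zero-divisor (`D(f) ∩ D(g) = D(fg)` is empty only if `fg`, hence `g`,
is nilpotent). Since the primes of `D(f)` are those of `A_f`, where the rank is `d`, the rank is
`d` everywhere. For the summand: `V₁` is flat, so no non-zero element of it is killed by a power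
of `f`, while `(V₁)_f = 0` says that every element is.
-/

open scoped nonZeroDivisors

theorem IsNilpotent.of_mul_mem_nonZeroDivisors {R : Type*} [CommMonoidWithZero R] {f g : R}
    (hf : f ∈ R⁰) (h : IsNilpotent (g * f)) : IsNilpotent g := by
  obtain ⟨n, hn⟩ := h
  rw [mul_pow, mul_right_mem_nonZeroDivisors_eq_zero_iff (pow_mem hf n)] at hn
  exact ⟨n, hn⟩

theorem PrimeSpectrum.dense_basicOpen_of_mem_nonZeroDivisors {R : Type*} [CommRing R] {f : R}
    (hf : f ∈ R⁰) : Dense (basicOpen f : Set (PrimeSpectrum R)) := by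
  refine isTopologicalBasis_basic_opens.dense_iff.mpr ?_
  rintro _ ⟨g, rfl⟩ hg
  rw [← TopologicalSpace.Opens.ne_bot_iff_nonempty, Ne, basicOpen_eq_bot_iff] at hg
  have hgf : basicOpen (g * f) ≠ ⊥ := by
    rw [Ne, basicOpen_eq_bot_iff]
    exact fun h ↦ hg (h.of_mul_mem_nonZeroDivisors hf)
  simpa [basicOpen_mul, TopologicalSpace.Opens.ne_bot_iff_nonempty] using hgf

theorem IsLocallyConstant.eq_of_dense {X Y : Type*} [TopologicalSpace X] {g : X → Y}
    (hg : IsLocallyConstant g) {s : Set X} (hs : Dense s) {y : Y} (h : ∀ x ∈ s, g x = y)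
    (x : X) : g x = y := by
  obtain ⟨z, hzx, hzs⟩ := hs.inter_open_nonempty _ (hg {g x}) ⟨x, rfl⟩
  exact hzx.symm.trans (h z hzs)

theorem Module.Flat.subsingleton_of_subsingleton_localizedModule {R M : Type*} [CommRing R]
    [AddCommGroup M] [Module R M] [Module.Flat R M] {S : Submonoid R} (hS : S ≤ R⁰)
    [Subsingleton (LocalizedModule S M)] : Subsingleton M := by
  refine subsingleton_of_forall_eq 0 fun m ↦ ?_
  obtain ⟨r, hr, hrm⟩ := LocalizedModule.subsingleton_iff.mp ‹_› m
  exact isSMulRegular_of_nonZeroDivisors (hS hr) (hrm.trans (smul_zero r).symm)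

theorem stmt_8 {A : Type} [CommRing A] (f : A) (hf : f ∈ nonZeroDivisors A)
    (V : Type) [AddCommGroup V] [Module A V]
    [Module.Finite A V] [Module.Projective A V] (d : ℕ)
    (hconst : ∀ (P : Ideal (Localization (Submonoid.powers f))) [P.IsPrime],
      Module.finrank (Localization.AtPrime P)
        (LocalizedModule P.primeCompl (LocalizedModule (Submonoid.powers f) V)) = d) :
    (∀ (p : Ideal A) [p.IsPrime],
      Module.finrank (Localization.AtPrime p) (LocalizedModule p.primeCompl V) = d) ∧
    (∀ (V₀ V₁ : Type) (_ : AddCommGroup V₀) (_ : AddCommGroup V₁)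
      (_ : Module A V₀) (_ : Module A V₁),
      Nonempty (V ≃ₗ[A] V₀ × V₁) →
      Subsingleton (LocalizedModule (Submonoid.powers f) V₁) →
      Subsingleton V₁) := by
  constructor
  · intro p hp
    have : Module.FinitePresentation A V := Module.finitePresentation_of_projective A V
    refine Module.isLocallyConstant_rankAtStalk.eq_of_dense
      (PrimeSpectrum.dense_basicOpen_of_mem_nonZeroDivisors hf) (fun q hq ↦ ?_) ⟨p, hp⟩
    obtain ⟨Q, rfl⟩ :
        q ∈ Set.range (PrimeSpectrum.comap (algebraMap A (Localization.Away f))) := by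
      rwa [PrimeSpectrum.localization_away_comap_range (Localization.Away f) f]
    rw [← Module.rankAtStalk_isBaseChange (LocalizedModule.isBaseChange (.powers f) V)]
    exact hconst Q.asIdeal
  · rintro V₀ V₁ _ _ _ _ ⟨e⟩ _
    have : Module.Flat A V₁ := .of_retract (e.symm.toLinearMap ∘ₗ .inr A V₀ V₁)
      (.snd A V₀ V₁ ∘ₗ e.toLinearMap) (by ext; simp)
    exact Module.Flat.subsingleton_of_subsingleton_localizedModule (Submonoid.powers_le.mpr hf)
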